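/- arXiv:2405.20074 — 3 statements merged into one kernel-verified Lean document; each statement's English description precedes it below -/
import Mathlib

section
/- For every γ > 0 and every x ∈ ℝ, the smoothed maximum satisfies the two-sided relation (1/7)·m_γ'(x)·x ≤ m_γ(x) ≤ m_γ'(x)·x, i.e. the inequality m_γ'(x)·x/c₁ ≤ m_γ(x) ≤ c₂·m_γ'(x)·x holds with c₁ = 7 and c₂ = 1. -/
/-- The smoothed maximum `m_γ`, a `C²` regularization of `x ↦ max 0 x`. -/
noncomputable def smoothedMax (γ x : ℝ) : ℝ :=
  if 0 < x ∧ x < 1 / (2 * γ) then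
    48 * γ ^ 4 * x ^ 5 - 64 * γ ^ 3 * x ^ 4 + 24 * γ ^ 2 * x ^ 3
  else max 0 x

/-- The derivative of the smoothed maximum. -/
noncomputable def smoothedMaxDeriv (γ x : ℝ) : ℝ :=
  if 0 < x ∧ x < 1 / (2 * γ) then
    240 * γ ^ 4 * x ^ 4 - 256 * γ ^ 3 * x ^ 3 + 72 * γ ^ 2 * x ^ 2
  else if x ≤ 0 then 0 else 1

/-!
On `(0, 1/(2γ))` both `m_γ(x)` and `m_γ'(x) x` are `γ²x³` times a quadratic in `γx`, and the two
inequalities reduce to the perfect squares `m_γ'(x) x - m_γ(x) = 48 γ²x³ (2γx - 1)²` and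
`7 m_γ(x) - m_γ'(x) x = 96 γ²x³ (γx - 1)²`. Outside that interval `m_γ'(x) x = m_γ(x)`.
-/

theorem smoothedMax_poly_le_deriv_mul {R : Type*} [CommRing R] [LinearOrder R]
    [IsStrictOrderedRing R] (γ : R) {x : R} (hx : 0 ≤ x) :
    48 * γ ^ 4 * x ^ 5 - 64 * γ ^ 3 * x ^ 4 + 24 * γ ^ 2 * x ^ 3 ≤
      (240 * γ ^ 4 * x ^ 4 - 256 * γ ^ 3 * x ^ 3 + 72 * γ ^ 2 * x ^ 2) * x := by
  have gap : (240 * γ ^ 4 * x ^ 4 - 256 * γ ^ 3 * x ^ 3 + 72 * γ ^ 2 * x ^ 2) * x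
      - (48 * γ ^ 4 * x ^ 5 - 64 * γ ^ 3 * x ^ 4 + 24 * γ ^ 2 * x ^ 3)
      = 48 * γ ^ 2 * x ^ 3 * (2 * γ * x - 1) ^ 2 := by ring
  have : 0 ≤ 48 * γ ^ 2 * x ^ 3 * (2 * γ * x - 1) ^ 2 := by positivity
  linarith

theorem deriv_mul_div_seven_le_smoothedMax_poly {K : Type*} [Field K] [LinearOrder K]
    [IsStrictOrderedRing K] (γ : K) {x : K} (hx : 0 ≤ x) :
    (240 * γ ^ 4 * x ^ 4 - 256 * γ ^ 3 * x ^ 3 + 72 * γ ^ 2 * x ^ 2) * x / 7 ≤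
      48 * γ ^ 4 * x ^ 5 - 64 * γ ^ 3 * x ^ 4 + 24 * γ ^ 2 * x ^ 3 := by
  have gap : 7 * (48 * γ ^ 4 * x ^ 5 - 64 * γ ^ 3 * x ^ 4 + 24 * γ ^ 2 * x ^ 3)
      - (240 * γ ^ 4 * x ^ 4 - 256 * γ ^ 3 * x ^ 3 + 72 * γ ^ 2 * x ^ 2) * x
      = 96 * γ ^ 2 * x ^ 3 * (γ * x - 1) ^ 2 := by ring
  have : 0 ≤ 96 * γ ^ 2 * x ^ 3 * (γ * x - 1) ^ 2 := by positivity
  rw [div_le_iff₀ (by norm_num)]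
  linarith

theorem smoothedMax_deriv_relation_general (γ : ℝ) (x : ℝ) :
    smoothedMaxDeriv γ x * x / 7 ≤ smoothedMax γ x ∧
      smoothedMax γ x ≤ 1 * (smoothedMaxDeriv γ x * x) := by
  unfold smoothedMax smoothedMaxDeriv
  split_ifs with hmid hneg
  · exact ⟨deriv_mul_div_seven_le_smoothedMax_poly γ hmid.1.le,
      (one_mul _).trans_ge (smoothedMax_poly_le_deriv_mul γ hmid.1.le)⟩
  · simp [max_eq_left hneg]
  · rw [max_eq_right (not_le.mp hneg).le]
    constructor <;> linarith [not_le.mp hneg]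

theorem smoothedMax_deriv_relation (γ : ℝ) (hγ : 0 < γ) (x : ℝ) :
    smoothedMaxDeriv γ x * x / 7 ≤ smoothedMax γ x ∧
      smoothedMax γ x ≤ 1 * (smoothedMaxDeriv γ x * x) :=
  smoothedMax_deriv_relation_general γ x
end

section
/- For every γ > 0 and every x ∈ ℝ, one has max(0, x) ≤ m_γ(x) + 1/(2γ). -/
theorem smoothedMax_quintic_nonneg (γ : ℝ) {x : ℝ} (hx : 0 ≤ x) :
    0 ≤ 48 * γ ^ 4 * x ^ 5 - 64 * γ ^ 3 * x ^ 4 + 24 * γ ^ 2 * x ^ 3 := by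
  have hsq : 0 ≤ γ ^ 2 * x ^ 3 * (4 / 3 * (6 * γ * x - 4) ^ 2 + 8 / 3) := by positivity
  linarith [show γ ^ 2 * x ^ 3 * (4 / 3 * (6 * γ * x - 4) ^ 2 + 8 / 3) =
    48 * γ ^ 4 * x ^ 5 - 64 * γ ^ 3 * x ^ 4 + 24 * γ ^ 2 * x ^ 3 by ring]

theorem smoothedMax_nonneg (γ x : ℝ) : 0 ≤ smoothedMax γ x := by
  unfold smoothedMax
  split_ifs with h
  · exact smoothedMax_quintic_nonneg γ h.1.le
  · exact le_max_left 0 x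

theorem max_le_smoothedMax_add (γ : ℝ) (hγ : 0 < γ) (x : ℝ) :
    max 0 x ≤ smoothedMax γ x + 1 / (2 * γ) := by
  by_cases h : 0 < x ∧ x < 1 / (2 * γ)
  · calc max 0 x = x := max_eq_right h.1.le
      _ ≤ 1 / (2 * γ) := h.2.le
      _ ≤ smoothedMax γ x + 1 / (2 * γ) := le_add_of_nonneg_left (smoothedMax_nonneg γ x)
  · have hwidth : 0 < 1 / (2 * γ) := by positivity
    rw [smoothedMax, if_neg h]
    linarith
end

section
/- For every γ > 0 and every x ∈ ℝ, one has m_γ(x)² ≤ x·m_γ(x); in particular x·m_γ(x) ≥ 0. -/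
theorem sq_le_mul_of_mem_uIcc {m x : ℝ} (h : m ∈ Set.uIcc 0 x) : m ^ 2 ≤ x * m := by
  rcases Set.mem_uIcc.mp h with ⟨h0, hx⟩ | ⟨hx, h0⟩ <;> nlinarith

def smoothingPoly (t : ℝ) : ℝ := 3 * t ^ 4 - 8 * t ^ 3 + 6 * t ^ 2

theorem smoothingPoly_nonneg (t : ℝ) : 0 ≤ smoothingPoly t := by
  have hquad : 0 < 3 * t ^ 2 - 8 * t + 6 := by nlinarith [sq_nonneg (3 * t - 4)]
  have : smoothingPoly t = t ^ 2 * (3 * t ^ 2 - 8 * t + 6) := by unfold smoothingPoly; ring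
  rw [this]
  positivity

theorem smoothingPoly_le_one {t : ℝ} (h0 : 0 ≤ t) (h1 : t ≤ 1) : smoothingPoly t ≤ 1 := by
  have : 1 - smoothingPoly t = (1 - t) ^ 3 * (1 + 3 * t) := by unfold smoothingPoly; ring
  have : 0 ≤ (1 - t) ^ 3 * (1 + 3 * t) := by
    have : 0 ≤ 1 - t := by linarith
    positivity
  linarith

theorem smoothedMax_eq_mul_smoothingPoly (γ x : ℝ) (h : 0 < x ∧ x < 1 / (2 * γ)) :
    smoothedMax γ x = x * smoothingPoly (2 * γ * x) := by
  rw [smoothedMax, if_pos h, smoothingPoly]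
  ring

theorem smoothedMax_mem_uIcc (γ x : ℝ) : smoothedMax γ x ∈ Set.uIcc 0 x := by
  by_cases h : 0 < x ∧ x < 1 / (2 * γ)
  · obtain ⟨hx, hxγ⟩ := h
    have hγ : 0 < 2 * γ := one_div_pos.mp (hx.trans hxγ)
    have ht : 2 * γ * x < 1 := by rwa [lt_div_iff₀ hγ, mul_comm] at hxγ
    rw [smoothedMax_eq_mul_smoothingPoly γ x ⟨hx, hxγ⟩, Set.uIcc_of_le hx.le]
    constructor
    · exact mul_nonneg hx.le (smoothingPoly_nonneg _)
    · exact mul_le_of_le_one_right hx.le (smoothingPoly_le_one (by positivity) ht.le)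
  · rw [smoothedMax, if_neg h]
    rcases le_total x 0 with hx | hx
    · simp [max_eq_left hx]
    · simp [max_eq_right hx]

theorem smoothedMax_sq_le_general (γ : ℝ) (x : ℝ) :
    smoothedMax γ x ^ 2 ≤ x * smoothedMax γ x ∧ 0 ≤ x * smoothedMax γ x := by
  have hsq := sq_le_mul_of_mem_uIcc (smoothedMax_mem_uIcc γ x)
  exact ⟨hsq, (sq_nonneg _).trans hsq⟩

theorem smoothedMax_sq_le (γ : ℝ) (hγ : 0 < γ) (x : ℝ) :
    smoothedMax γ x ^ 2 ≤ x * smoothedMax γ x ∧ 0 ≤ x * smoothedMax γ x :=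
  smoothedMax_sq_le_general γ x
end
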